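/- arXiv:2601.19772 — 4 statements merged into one kernel-verified Lean document; each statement's English description precedes it below -/
import Mathlib

section
/- For any category C, every word of morphisms has a unique normal form: for each word w there exists a unique word w' such that w →* w' and w' is a normal form. -/
open CategoryTheory

/-- A word of morphisms in a category `C`: a finite list of morphisms, each recorded
with its source and target. -/
abbrev CatWord (C : Type*) [Category C] : Type _ := List (Σ a b : C, a ⟶ b)

/-- The rewrite relation on words of morphisms: delete an identity entry, or replace
two adjacent composable entries `(f, g)` by the single entry `g ∘ f`. -/
inductive RwStep {C : Type*} [Category C] : CatWord C → CatWord C → Prop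
  | del (u v : CatWord C) (a : C) :
      RwStep (u ++ ⟨a, a, 𝟙 a⟩ :: v) (u ++ v)
  | comp (u v : CatWord C) {a b c : C} (f : a ⟶ b) (g : b ⟶ c) :
      RwStep (u ++ ⟨a, b, f⟩ :: ⟨b, c, g⟩ :: v) (u ++ ⟨a, c, f ≫ g⟩ :: v)


/-- A word is a normal form if no rewrite step applies to it. -/
def IsNormalForm {C : Type*} [Category C] (w : CatWord C) : Prop :=
  ∀ z : CatWord C, ¬ RwStep w z

/-!
Instead of proving confluence, normalize by a function: push the entries of a word, from the
right, onto an already reduced word, composing the new entry into the head while they are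
composable and dropping it if it is an identity. By associativity and the unit laws, pushing
`q` and then `p` is the same as pushing `q ∘ p`, so this normalization is invariant under both
kinds of rewrite step. Every word rewrites to its normalization, and normal forms are exactly
the reduced words (no identities, no composable neighbours), which normalization fixes; so any
normal form reachable from `w` is the normalization of `w`.
-/

namespace CatWord

variable {C : Type*} [Category C]

def IsIdEntry (p : Σ a b : C, a ⟶ b) : Prop := ∃ a, p = ⟨a, a, 𝟙 a⟩

lemma isIdEntry_id (a : C) : IsIdEntry (⟨a, a, 𝟙 a⟩ : Σ a b : C, a ⟶ b) := ⟨a, rfl⟩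

def compEntry (p q : Σ a b : C, a ⟶ b) (h : p.2.1 = q.1) : Σ a b : C, a ⟶ b :=
  ⟨p.1, q.2.1, p.2.2 ≫ eqToHom h ≫ q.2.2⟩

lemma compEntry_mk {a b c : C} (f : a ⟶ b) (g : b ⟶ c) :
    compEntry ⟨a, b, f⟩ ⟨b, c, g⟩ rfl = ⟨a, c, f ≫ g⟩ := by
  simp [compEntry]

lemma compEntry_of_isIdEntry_right (p q : Σ a b : C, a ⟶ b) (h : p.2.1 = q.1)
    (hq : IsIdEntry q) : compEntry p q h = p := by
  obtain ⟨b, rfl⟩ := hq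
  obtain ⟨x, y, f⟩ := p
  dsimp only at h
  subst h
  simp [compEntry]

lemma compEntry_of_isIdEntry_left (p q : Σ a b : C, a ⟶ b) (h : p.2.1 = q.1)
    (hp : IsIdEntry p) : compEntry p q h = q := by
  obtain ⟨a, rfl⟩ := hp
  obtain ⟨x, y, f⟩ := q
  dsimp only at h
  subst h
  simp [compEntry]

lemma compEntry_assoc (p q r : Σ a b : C, a ⟶ b) (h₁ : p.2.1 = q.1) (h₂ : q.2.1 = r.1) :
    compEntry p (compEntry q r h₂) h₁ = compEntry (compEntry p q h₁) r h₂ := by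
  obtain ⟨a, b, f⟩ := p
  obtain ⟨x, c, g⟩ := q
  obtain ⟨y, d, e⟩ := r
  dsimp only at h₁ h₂
  subst h₁ h₂
  simp [compEntry]

def IsReduced (l : CatWord C) : Prop :=
  (∀ p ∈ l, ¬ IsIdEntry p) ∧ l.IsChain (fun p q => p.2.1 ≠ q.1)

lemma isReduced_nil : IsReduced ([] : CatWord C) :=
  ⟨fun _ h => absurd h List.not_mem_nil, List.IsChain.nil⟩

lemma IsReduced.of_cons {p : Σ a b : C, a ⟶ b} {l : CatWord C} (h : IsReduced (p :: l)) :
    IsReduced l :=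
  ⟨fun q hq => h.1 q (List.mem_cons_of_mem _ hq), h.2.tail⟩

lemma IsReduced.cons {p : Σ a b : C, a ⟶ b} {l : CatWord C} (hp : ¬ IsIdEntry p)
    (hhead : ∀ q ∈ l.head?, p.2.1 ≠ q.1) (hl : IsReduced l) : IsReduced (p :: l) := by
  refine ⟨?_, List.isChain_cons.mpr ⟨hhead, hl.2⟩⟩
  rintro x hx
  rcases List.mem_cons.mp hx with rfl | hx
  · exact hp
  · exact hl.1 x hx

open Classical in
/-- Composability is tested before identity, so that `reduceCons_reduceCons` holds on all
words, not only reduced ones. -/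
noncomputable def reduceCons (p : Σ a b : C, a ⟶ b) : CatWord C → CatWord C
  | [] => if IsIdEntry p then [] else [p]
  | q :: t =>
    if h : p.2.1 = q.1 then reduceCons (compEntry p q h) t
    else if IsIdEntry p then q :: t else p :: q :: t

noncomputable def normalize : CatWord C → CatWord C
  | [] => []
  | p :: t => reduceCons p (normalize t)

section reduceCons

variable {p q : Σ a b : C, a ⟶ b}

lemma reduceCons_nil_of_isIdEntry (hp : IsIdEntry p) : reduceCons p [] = [] := by
  rw [reduceCons, if_pos hp]

lemma reduceCons_nil_of_not_isIdEntry (hp : ¬ IsIdEntry p) : reduceCons p [] = [p] := by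
  rw [reduceCons, if_neg hp]

lemma reduceCons_cons_of_comp (h : p.2.1 = q.1) (t : CatWord C) :
    reduceCons p (q :: t) = reduceCons (compEntry p q h) t := by
  rw [reduceCons, dif_pos h]

lemma reduceCons_cons_of_isIdEntry (h : p.2.1 ≠ q.1) (hp : IsIdEntry p) (t : CatWord C) :
    reduceCons p (q :: t) = q :: t := by
  rw [reduceCons, dif_neg h, if_pos hp]

lemma reduceCons_cons_of_not_isIdEntry (h : p.2.1 ≠ q.1) (hp : ¬ IsIdEntry p)
    (t : CatWord C) : reduceCons p (q :: t) = p :: q :: t := by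
  rw [reduceCons, dif_neg h, if_neg hp]

lemma reduceCons_of_isReduced {l : CatWord C} (h : IsReduced (p :: l)) :
    reduceCons p l = p :: l := by
  have hp : ¬ IsIdEntry p := h.1 p List.mem_cons_self
  cases l with
  | nil => exact reduceCons_nil_of_not_isIdEntry hp
  | cons q t => exact reduceCons_cons_of_not_isIdEntry (List.isChain_cons_cons.mp h.2).1 hp t

lemma reduceCons_id {a : C} {l : CatWord C} (h : IsReduced l) :
    reduceCons ⟨a, a, 𝟙 a⟩ l = l := by
  cases l with
  | nil => exact reduceCons_nil_of_isIdEntry (isIdEntry_id a)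
  | cons q t =>
    by_cases hc : a = q.1
    · rw [reduceCons_cons_of_comp hc, compEntry_of_isIdEntry_left _ _ _ (isIdEntry_id a),
        reduceCons_of_isReduced h]
    · exact reduceCons_cons_of_isIdEntry hc (isIdEntry_id a) t

lemma reduceCons_reduceCons (l : CatWord C) (h : p.2.1 = q.1) :
    reduceCons p (reduceCons q l) = reduceCons (compEntry p q h) l := by
  induction l generalizing p q with
  | nil =>
    by_cases hq : IsIdEntry q
    · rw [reduceCons_nil_of_isIdEntry hq, compEntry_of_isIdEntry_right _ _ _ hq]
    · rw [reduceCons_nil_of_not_isIdEntry hq, reduceCons_cons_of_comp h]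
  | cons r t ih =>
    by_cases hqr : q.2.1 = r.1
    · rw [reduceCons_cons_of_comp hqr, ih (q := compEntry q r hqr) h,
        reduceCons_cons_of_comp (p := compEntry p q h) hqr,
        compEntry_assoc]
    · by_cases hq : IsIdEntry q
      · rw [reduceCons_cons_of_isIdEntry hqr hq, compEntry_of_isIdEntry_right _ _ _ hq]
      · rw [reduceCons_cons_of_not_isIdEntry hqr hq, reduceCons_cons_of_comp h]

lemma IsReduced.reduceCons {l : CatWord C} (hl : IsReduced l) (p : Σ a b : C, a ⟶ b) :
    IsReduced (reduceCons p l) := by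
  induction l generalizing p with
  | nil =>
    by_cases hp : IsIdEntry p
    · rw [reduceCons_nil_of_isIdEntry hp]; exact isReduced_nil
    · rw [reduceCons_nil_of_not_isIdEntry hp]; exact isReduced_nil.cons hp (by simp)
  | cons r t ih =>
    by_cases h : p.2.1 = r.1
    · rw [reduceCons_cons_of_comp h]; exact ih hl.of_cons _
    · by_cases hp : IsIdEntry p
      · rw [reduceCons_cons_of_isIdEntry h hp]; exact hl
      · rw [reduceCons_cons_of_not_isIdEntry h hp]; exact hl.cons hp (by simpa using h)

end reduceCons

lemma isReduced_normalize (l : CatWord C) : IsReduced (normalize l) := by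
  induction l with
  | nil => exact isReduced_nil
  | cons p t ih => exact ih.reduceCons p

lemma normalize_of_isReduced {l : CatWord C} (h : IsReduced l) : normalize l = l := by
  induction l with
  | nil => rfl
  | cons p t ih => rw [normalize, ih h.of_cons, reduceCons_of_isReduced h]

lemma normalize_append_id_cons (u v : CatWord C) (a : C) :
    normalize (u ++ ⟨a, a, 𝟙 a⟩ :: v) = normalize (u ++ v) := by
  induction u with
  | nil => exact reduceCons_id (isReduced_normalize v)
  | cons p t ih => exact congrArg (reduceCons p) ih

lemma normalize_append_comp (u v : CatWord C) {a b c : C} (f : a ⟶ b) (g : b ⟶ c) :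
    normalize (u ++ ⟨a, b, f⟩ :: ⟨b, c, g⟩ :: v) =
      normalize (u ++ ⟨a, c, f ≫ g⟩ :: v) := by
  induction u with
  | nil =>
    change reduceCons _ (reduceCons _ _) = _
    rw [reduceCons_reduceCons _ rfl, compEntry_mk]
    rfl
  | cons p t ih => exact congrArg (reduceCons p) ih

lemma _root_.RwStep.normalize_eq {w z : CatWord C} (h : RwStep w z) :
    normalize w = normalize z := by
  cases h with
  | del u v a => exact normalize_append_id_cons u v a
  | comp u v f g => exact normalize_append_comp u v f g

lemma normalize_eq_of_reflTransGen {w z : CatWord C} (h : Relation.ReflTransGen RwStep w z) :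
    normalize w = normalize z := by
  induction h with
  | refl => rfl
  | tail _ hstep ih => exact ih.trans hstep.normalize_eq

lemma _root_.RwStep.cons {l l' : CatWord C} (p : Σ a b : C, a ⟶ b) (h : RwStep l l') :
    RwStep (p :: l) (p :: l') := by
  cases h with
  | del u v a => exact RwStep.del (p :: u) v a
  | comp u v f g => exact RwStep.comp (p :: u) v f g

lemma rwStep_id_cons (a : C) (l : CatWord C) : RwStep (⟨a, a, 𝟙 a⟩ :: l) l :=
  RwStep.del [] l a

lemma rwStep_compEntry (p q : Σ a b : C, a ⟶ b) (h : p.2.1 = q.1) (t : CatWord C) :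
    RwStep (p :: q :: t) (compEntry p q h :: t) := by
  obtain ⟨a, b, f⟩ := p
  obtain ⟨x, c, g⟩ := q
  dsimp only at h
  subst h
  rw [compEntry_mk]
  exact RwStep.comp [] t f g

lemma reflTransGen_reduceCons {l : CatWord C} (hl : IsReduced l) (p : Σ a b : C, a ⟶ b) :
    Relation.ReflTransGen RwStep (p :: l) (reduceCons p l) := by
  induction l generalizing p with
  | nil =>
    by_cases hp : IsIdEntry p
    · obtain ⟨a, rfl⟩ := hp
      rw [reduceCons_nil_of_isIdEntry (isIdEntry_id a)]
      exact .single (rwStep_id_cons a [])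
    · rw [reduceCons_nil_of_not_isIdEntry hp]
  | cons r t ih =>
    by_cases h : p.2.1 = r.1
    · rw [reduceCons_cons_of_comp h]
      exact .head (rwStep_compEntry p r h t) (ih hl.of_cons _)
    · by_cases hp : IsIdEntry p
      · obtain ⟨a, rfl⟩ := hp
        rw [reduceCons_cons_of_isIdEntry h (isIdEntry_id a)]
        exact .single (rwStep_id_cons a _)
      · rw [reduceCons_cons_of_not_isIdEntry h hp]

lemma reflTransGen_normalize (w : CatWord C) :
    Relation.ReflTransGen RwStep w (normalize w) := by
  induction w with
  | nil => rfl
  | cons p t ih =>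
    have hcons : Relation.ReflTransGen RwStep (p :: t) (p :: normalize t) :=
      Relation.ReflTransGen.lift (p :: ·) (fun _ _ => RwStep.cons p) _ _ ih
    exact hcons.trans (reflTransGen_reduceCons (isReduced_normalize t) p)

lemma isNormalForm_iff_isReduced {l : CatWord C} : IsNormalForm l ↔ IsReduced l := by
  refine ⟨fun h => ?_, fun h z hz => ?_⟩
  · induction l with
    | nil => exact isReduced_nil
    | cons p t ih =>
      refine IsReduced.cons ?_ ?_ (ih fun z hz => h _ (hz.cons p))
      · rintro ⟨a, rfl⟩
        exact h t (rwStep_id_cons a t)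
      · rintro q hq hc
        obtain ⟨s, rfl⟩ : ∃ s, t = q :: s := List.head?_eq_some_iff.mp hq
        exact h _ (rwStep_compEntry p q hc s)
  · cases hz with
    | del u v a => exact h.1 _ (by simp) (isIdEntry_id a)
    | comp u v f g =>
      exact (List.isChain_cons_cons.mp (List.isChain_append.mp h.2).2.1).1 rfl

end CatWord

open CatWord in
/-- Every word of morphisms has a unique normal form. -/
theorem exists_unique_normal_form (C : Type*) [Category C] (w : CatWord C) :
    ∃! w' : CatWord C, Relation.ReflTransGen RwStep w w' ∧ IsNormalForm w' := by
  refine ⟨normalize w,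
    ⟨reflTransGen_normalize w, isNormalForm_iff_isReduced.mpr (isReduced_normalize w)⟩, ?_⟩
  rintro w' ⟨hw', hnf⟩
  rw [normalize_eq_of_reflTransGen hw',
    normalize_of_isReduced (isNormalForm_iff_isReduced.mp hnf)]
end

section
/- For any category C, the assignment sending a morphism f to nf([f]) defines a functor from C to the monoid M(C) (viewed as a one-object category): every identity morphism of C is sent to the empty word, and for composable morphisms f : a ⟶ b and g : b ⟶ c one has nf([g ∘ f]) = nf([g]) • nf([f]). -/
/-!
A one-entry word is already normal unless its entry is an identity, in which case its only
normal form is the empty word; so identities go to `[]`, and if `f` or `g` is an identity the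
composition law reduces to `nf (nf w) = nf w`. Otherwise the only step out of `[f, g]` is the
composition step to `[g ∘ f]`, so `nf [f, g]` and `nf [g ∘ f]` are both normal forms reachable
from the one-entry word `[g ∘ f]`, which has at most one.
-/

open CategoryTheory

section Rewriting

variable {C : Type*} [Category C] {a b c : C}

lemma exists_eq_eqToHom_of_sigma_eq_id {p : C} {f : a ⟶ b}
    (h : (⟨a, b, f⟩ : Σ a b : C, a ⟶ b) = ⟨p, p, 𝟙 p⟩) : ∃ h : a = b, f = eqToHom h := by
  cases h
  exact ⟨rfl, rfl⟩

lemma rwStep_singleton_iff {f : a ⟶ b} {z : CatWord C} :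
    RwStep [⟨a, b, f⟩] z ↔ z = [] ∧ ∃ h : a = b, f = eqToHom h := by
  refine ⟨fun h => ?_, ?_⟩
  · generalize hw : [(⟨a, b, f⟩ : Σ a b : C, a ⟶ b)] = w at h
    cases h with
    | del u v p =>
      rcases u with _ | ⟨x, u⟩
      · simp only [List.nil_append, List.cons.injEq] at hw ⊢
        exact ⟨hw.2.symm, exists_eq_eqToHom_of_sigma_eq_id hw.1⟩
      · simp at hw
    | comp u v f g => rcases u with _ | ⟨x, u⟩ <;> simp at hw
  · rintro ⟨rfl, rfl, rfl⟩
    exact RwStep.del [] [] a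

lemma RwStep.length_eq {w z : CatWord C} (h : RwStep w z) : w.length = z.length + 1 := by
  cases h <;> simp only [List.length_append, List.length_cons] <;> omega

lemma isNormalForm_nil : IsNormalForm ([] : CatWord C) :=
  fun _ h => by simpa using h.length_eq

lemma isNormalForm_singleton_iff {f : a ⟶ b} :
    IsNormalForm [⟨a, b, f⟩] ↔ ¬ ∃ h : a = b, f = eqToHom h := by
  simp [IsNormalForm, rwStep_singleton_iff]

lemma eq_comp_of_rwStep_pair {f : a ⟶ b} {g : b ⟶ c} {z : CatWord C}
    (hf : IsNormalForm [⟨a, b, f⟩]) (hg : IsNormalForm [⟨b, c, g⟩])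
    (h : RwStep [⟨a, b, f⟩, ⟨b, c, g⟩] z) : z = [⟨a, c, f ≫ g⟩] := by
  generalize hw : [(⟨a, b, f⟩ : Σ a b : C, a ⟶ b), ⟨b, c, g⟩] = w at h
  cases h with
  | del u v p =>
    rcases u with _ | ⟨x, _ | ⟨y, u⟩⟩
    · simp only [List.nil_append, List.cons.injEq] at hw
      exact absurd (exists_eq_eqToHom_of_sigma_eq_id hw.1) (isNormalForm_singleton_iff.mp hf)
    · simp only [List.cons_append, List.nil_append, List.cons.injEq] at hw
      exact absurd (exists_eq_eqToHom_of_sigma_eq_id hw.2.1) (isNormalForm_singleton_iff.mp hg)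
    · simp at hw
  | comp u v f' g' =>
    rcases u with _ | ⟨x, u⟩
    · simp only [List.nil_append, List.cons.injEq] at hw
      obtain ⟨hf', hg', rfl⟩ := hw
      cases hf'
      cases hg'
      rfl
    · simp [List.singleton_eq_append_iff] at hw

lemma IsNormalForm.eq_of_reflTransGen {w n : CatWord C} (hw : IsNormalForm w)
    (h : Relation.ReflTransGen RwStep w n) : n = w := by
  rcases h.cases_head with rfl | ⟨z, hz, -⟩
  · rfl
  · exact absurd hz (hw z)

lemma reflTransGen_singleton {x : Σ a b : C, a ⟶ b} {n : CatWord C}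
    (h : Relation.ReflTransGen RwStep [x] n) : n = [x] ∨ n = [] := by
  rcases h.cases_head with rfl | ⟨z, hz, hzn⟩
  · exact Or.inl rfl
  · obtain ⟨rfl, -⟩ := rwStep_singleton_iff.mp hz
    exact Or.inr (isNormalForm_nil.eq_of_reflTransGen hzn)

lemma IsNormalForm.eq_of_reflTransGen_singleton {x : Σ a b : C, a ⟶ b} {n₁ n₂ : CatWord C}
    (hn₁ : IsNormalForm n₁) (hn₂ : IsNormalForm n₂)
    (h₁ : Relation.ReflTransGen RwStep [x] n₁) (h₂ : Relation.ReflTransGen RwStep [x] n₂) :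
    n₁ = n₂ := by
  rcases reflTransGen_singleton h₁ with rfl | rfl
  · exact (hn₁.eq_of_reflTransGen h₂).symm
  · rcases reflTransGen_singleton h₂ with rfl | rfl
    · exact hn₂.eq_of_reflTransGen h₁
    · rfl

lemma reflTransGen_comp_of_reflTransGen_pair {f : a ⟶ b} {g : b ⟶ c} {n : CatWord C}
    (hf : IsNormalForm [⟨a, b, f⟩]) (hg : IsNormalForm [⟨b, c, g⟩]) (hn : IsNormalForm n)
    (h : Relation.ReflTransGen RwStep [⟨a, b, f⟩, ⟨b, c, g⟩] n) :
    Relation.ReflTransGen RwStep [⟨a, c, f ≫ g⟩] n := by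
  rcases h.cases_head with rfl | ⟨z, hz, hzn⟩
  · exact absurd (RwStep.comp [] [] f g) (hn _)
  · rwa [eq_comp_of_rwStep_pair hf hg hz] at hzn

end Rewriting

section NormalFormFunction

variable {C : Type*} [Category C] (nf : CatWord C → CatWord C)
  (hnf : ∀ w : CatWord C, Relation.ReflTransGen RwStep w (nf w) ∧ IsNormalForm (nf w))
include hnf

lemma nf_eq_self {w : CatWord C} (hw : IsNormalForm w) : nf w = w :=
  hw.eq_of_reflTransGen (hnf w).1

lemma nf_nf (w : CatWord C) : nf (nf w) = nf w :=
  nf_eq_self nf hnf (hnf w).2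

lemma nf_id (a : C) : nf [⟨a, a, 𝟙 a⟩] = [] :=
  (reflTransGen_singleton (hnf _).1).resolve_left fun h =>
    isNormalForm_singleton_iff.mp (h ▸ (hnf _).2) ⟨rfl, rfl⟩

end NormalFormFunction

/-- Sending a morphism `f` to `nf [f]` defines a functor from `C` to the monoid `M(C)`
of normal forms with multiplication `x • y := nf (y ++ x)`: identities go to the empty
word, and `nf [g ∘ f] = nf [g] • nf [f] = nf (nf [f] ++ nf [g])` for composable `f, g`.
Here `nf` is any function assigning to each word its (unique) normal form. -/
theorem nf_functorial (C : Type*) [Category C] (nf : CatWord C → CatWord C)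
    (hnf : ∀ w : CatWord C, Relation.ReflTransGen RwStep w (nf w) ∧ IsNormalForm (nf w)) :
    (∀ a : C, nf [⟨a, a, 𝟙 a⟩] = []) ∧
    (∀ (a b c : C) (f : a ⟶ b) (g : b ⟶ c),
      -- `nf [g ∘ f] = nf [g] • nf [f]` where `x • y := nf (y ++ x)`
      nf [⟨a, c, f ≫ g⟩] = nf (nf [⟨a, b, f⟩] ++ nf [⟨b, c, g⟩])) := by
  refine ⟨nf_id nf hnf, fun a b c f g => ?_⟩
  by_cases hf : IsNormalForm [⟨a, b, f⟩]
  · by_cases hg : IsNormalForm [⟨b, c, g⟩]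
    · rw [nf_eq_self nf hnf hf, nf_eq_self nf hnf hg]
      exact (hnf _).2.eq_of_reflTransGen_singleton (hnf _).2 (hnf _).1 <|
        reflTransGen_comp_of_reflTransGen_pair hf hg (hnf _).2 (hnf _).1
    · obtain ⟨rfl, rfl⟩ := of_not_not (mt isNormalForm_singleton_iff.mpr hg)
      simp only [eqToHom_refl, Category.comp_id, nf_id nf hnf, List.append_nil, nf_nf nf hnf]
  · obtain ⟨rfl, rfl⟩ := of_not_not (mt isNormalForm_singleton_iff.mpr hf)
    simp only [eqToHom_refl, Category.id_comp, nf_id nf hnf, List.nil_append, nf_nf nf hnf]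
end

section
/- (One Mountain Theorem.) Let M be a partial group and f, g ∈ M. If the singleton words [f] and [g] are related by the equivalence relation on nonempty words generated by the single-contraction relation ⇝, then there exists a nonempty word w ∈ List M with w ⇝* [f] and w ⇝* [g]. -/
/-- A partial group in Chermak's sense: a nonempty set `M` with a domain `D` of words
containing all words of length at most `1`, a product `Π` (here `pi`, given as a total
function whose axioms only concern words in `D`), and an involution `inv`. -/
structure PartialGroup (M : Type u) where
  /-- The underlying set is nonempty. -/
  nonempty : Nonempty M
  /-- The set of words on which the product is defined. -/
  D : Set (List M)
  /-- The product `Π : D → M` (extended arbitrarily to all words). -/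
  pi : List M → M
  /-- The inversion `x ↦ x⁻¹`. -/
  inv : M → M
  /-- `D` contains all words of length at most `1`. -/
  mem_D_of_length_le_one : ∀ w : List M, w.length ≤ 1 → w ∈ D
  /-- (i) `Π [f] = f`. -/
  pi_single : ∀ f : M, pi [f] = f
  /-- (ii) if `u ++ v ∈ D` then `u ∈ D`. -/
  mem_D_of_append_left : ∀ u v : List M, u ++ v ∈ D → u ∈ D
  /-- (ii) if `u ++ v ∈ D` then `v ∈ D`. -/
  mem_D_of_append_right : ∀ u v : List M, u ++ v ∈ D → v ∈ D
  /-- (iii) if `u ++ v ++ w ∈ D` then `u ++ [Π v] ++ w ∈ D`. -/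
  mem_D_contract : ∀ u v w : List M, u ++ v ++ w ∈ D → u ++ [pi v] ++ w ∈ D
  /-- (iii) if `u ++ v ++ w ∈ D` then `Π (u ++ v ++ w) = Π (u ++ [Π v] ++ w)`. -/
  pi_contract : ∀ u v w : List M, u ++ v ++ w ∈ D → pi (u ++ v ++ w) = pi (u ++ [pi v] ++ w)
  /-- `inv` is an involution. -/
  inv_inv : ∀ x : M, inv (inv x) = x
  /-- (iv) if `w ∈ D` then `w⁻¹ ++ w ∈ D`, where `w⁻¹` is the entrywise-inverted
  reverse of `w`. -/
  mem_D_inv_append : ∀ w ∈ D, (w.reverse.map inv) ++ w ∈ D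
  /-- (iv) if `w ∈ D` then `Π (w⁻¹ ++ w) = 1 = Π []`. -/
  pi_inv_append : ∀ w ∈ D, pi ((w.reverse.map inv) ++ w) = pi []

/-- The formal inverse of a word: reverse it and invert each entry. -/
def PartialGroup.wInv {M : Type u} (P : PartialGroup M) (w : List M) : List M :=
  w.reverse.map P.inv

/-- The single-contraction relation `⇝` on words in a partial group:
`u ++ [a, b] ++ v ⇝ u ++ [Π [a, b]] ++ v` whenever `[a, b] ∈ D`. -/
def PartialGroup.Contract {M : Type u} (P : PartialGroup M) (x y : List M) : Prop :=
  ∃ (u v : List M) (a b : M), [a, b] ∈ P.D ∧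
    x = u ++ [a, b] ++ v ∧ y = u ++ [P.pi [a, b]] ++ v

/-- The reflexive–transitive closure `⇝*` of the single-contraction relation. -/
def PartialGroup.ContractStar {M : Type u} (P : PartialGroup M) : List M → List M → Prop :=
  Relation.ReflTransGen P.Contract

/-!
Two words `x, y` with a common descendant `z ≠ []` have a common ancestor, namely `x ++ z⁻¹ ++ y`:
contracting `y` to `z` leaves `x ++ z⁻¹ ++ z`, whose tail `z⁻¹ ++ z` collapses letter by letter
to `[1]`, which `x` absorbs; symmetrically it contracts to `y`. So "having a common ancestor" is
transitive, hence an equivalence relation containing `⇝`, and it therefore contains the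
equivalence relation generated by `⇝`. The ancestor of `[f]` is nonempty because `⇝` never
produces the empty word.
-/

namespace PartialGroup

variable {M : Type u} (P : PartialGroup M)

instance : IsPreorder (List M) P.ContractStar :=
  inferInstanceAs (IsPreorder _ (Relation.ReflTransGen P.Contract))

lemma singleton_mem_D (a : M) : [a] ∈ P.D :=
  P.mem_D_of_length_le_one [a] (by simp)

lemma mem_D_insert_one (u v : List M) (h : u ++ v ∈ P.D) : u ++ [P.pi []] ++ v ∈ P.D :=
  P.mem_D_contract u [] v (by simpa using h)

lemma pi_insert_one (u v : List M) (h : u ++ v ∈ P.D) :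
    P.pi (u ++ [P.pi []] ++ v) = P.pi (u ++ v) :=
  (P.pi_contract u [] v (by simpa using h)).symm.trans (by simp)

lemma contract_of_mem_D (u v : List M) {a b : M} (h : [a, b] ∈ P.D) :
    P.Contract (u ++ [a, b] ++ v) (u ++ [P.pi [a, b]] ++ v) :=
  ⟨u, v, a, b, h, rfl, rfl⟩

lemma contract_one_left (u v : List M) (a : M) :
    P.Contract (u ++ [P.pi [], a] ++ v) (u ++ [a] ++ v) := by
  have h := P.singleton_mem_D a
  have hpi : P.pi [P.pi [], a] = a := (P.pi_insert_one [] [a] h).trans (P.pi_single a)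
  simpa only [hpi] using P.contract_of_mem_D u v (P.mem_D_insert_one [] [a] h)

lemma contract_one_right (u v : List M) (a : M) :
    P.Contract (u ++ [a, P.pi []] ++ v) (u ++ [a] ++ v) := by
  have h := P.singleton_mem_D a
  have hpi : P.pi [a, P.pi []] = a := (P.pi_insert_one [a] [] h).trans (P.pi_single a)
  simpa only [hpi] using P.contract_of_mem_D u v (P.mem_D_insert_one [a] [] h)

lemma contract_inv_self (u v : List M) (a : M) :
    P.Contract (u ++ [P.inv a, a] ++ v) (u ++ [P.pi []] ++ v) := by
  have h := P.singleton_mem_D a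
  have hpi : P.pi [P.inv a, a] = P.pi [] := P.pi_inv_append [a] h
  simpa only [hpi] using P.contract_of_mem_D u v (P.mem_D_inv_append [a] h)

variable {P}

lemma Contract.contractStar {x y : List M} (h : P.Contract x y) : P.ContractStar x y :=
  .single h

lemma Contract.append (u v : List M) {x y : List M} (h : P.Contract x y) :
    P.Contract (u ++ x ++ v) (u ++ y ++ v) := by
  obtain ⟨u', v', a, b, hD, rfl, rfl⟩ := h
  simpa using P.contract_of_mem_D (u ++ u') (v' ++ v) hD

lemma ContractStar.append (u v : List M) {x y : List M} (h : P.ContractStar x y) :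
    P.ContractStar (u ++ x ++ v) (u ++ y ++ v) :=
  Relation.ReflTransGen.lift (fun w ↦ u ++ w ++ v) (fun _ _ ↦ Contract.append u v) _ _ h

lemma Contract.ne_nil {x y : List M} (h : P.Contract x y) : x ≠ [] ∧ y ≠ [] := by
  obtain ⟨u, v, a, b, _, rfl, rfl⟩ := h
  simp

lemma ContractStar.eq_nil_iff {x y : List M} (h : P.ContractStar x y) : x = [] ↔ y = [] := by
  induction h with
  | refl => rfl
  | tail _ hc ih =>
    have := hc.ne_nil
    simp_all

variable (P)

lemma wInv_wInv (y : List M) : P.wInv (P.wInv y) = y := by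
  simp [wInv, List.map_reverse, Function.comp_def, P.inv_inv]

lemma wInv_eq_nil_iff {y : List M} : P.wInv y = [] ↔ y = [] := by
  simp [wInv]

lemma wInv_append_self_contractStar {y : List M} (hy : y ≠ []) :
    P.ContractStar (P.wInv y ++ y) [P.pi []] := by
  induction y with
  | nil => exact absurd rfl hy
  | cons a y ih =>
    have cancel : P.ContractStar (P.wInv (a :: y) ++ a :: y) (P.wInv y ++ [P.pi []] ++ y) := by
      simpa [wInv] using (P.contract_inv_self (P.wInv y) y a).contractStar
    cases y with
    | nil => simpa [wInv] using cancel
    | cons b y =>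
      have absorb := P.contract_one_left (P.wInv (b :: y)) y b
      simp only [List.append_assoc, List.cons_append] at cancel absorb
      exact (cancel.tail absorb).trans (ih (List.cons_ne_nil b y))

lemma one_append_contractStar {w : List M} (hw : w ≠ []) :
    P.ContractStar ([P.pi []] ++ w) w := by
  obtain ⟨b, w, rfl⟩ := List.exists_cons_of_ne_nil hw
  exact (P.contract_one_left [] w b).contractStar

lemma append_one_contractStar {w : List M} (hw : w ≠ []) :
    P.ContractStar (w ++ [P.pi []]) w := by
  obtain ⟨w, c, rfl⟩ := (List.eq_nil_or_concat w).resolve_left hw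
  simpa using (P.contract_one_right w [] c).contractStar

lemma exists_contractStar_of_contractStar {x y z : List M} (hx : P.ContractStar x z)
    (hy : P.ContractStar y z) : ∃ w, P.ContractStar w x ∧ P.ContractStar w y := by
  rcases eq_or_ne z [] with rfl | hz
  · rw [hx.eq_nil_iff.mpr rfl, hy.eq_nil_iff.mpr rfl]
    exact ⟨[], .refl, .refl⟩
  refine ⟨x ++ P.wInv z ++ y, ?_, ?_⟩
  · calc P.ContractStar (x ++ P.wInv z ++ y) (x ++ (P.wInv z ++ z)) := by
          simpa using hy.append (x ++ P.wInv z) []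
      P.ContractStar _ (x ++ [P.pi []]) := by
          simpa using (P.wInv_append_self_contractStar hz).append x []
      P.ContractStar _ x := P.append_one_contractStar (hx.eq_nil_iff.not.mpr hz)
  · have hz' : P.wInv z ≠ [] := P.wInv_eq_nil_iff.not.mpr hz
    calc P.ContractStar (x ++ P.wInv z ++ y) (z ++ P.wInv z ++ y) := by
          simpa using hx.append [] (P.wInv z ++ y)
      P.ContractStar _ ([P.pi []] ++ y) := by
          simpa [wInv_wInv] using (P.wInv_append_self_contractStar hz').append [] y
      P.ContractStar _ y := P.one_append_contractStar (hy.eq_nil_iff.not.mpr hz)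

lemma equivalence_join_swap_contractStar :
    Equivalence (Relation.Join (Function.swap P.ContractStar)) :=
  Relation.equivalence_join fun _ _ _ ↦ P.exists_contractStar_of_contractStar

end PartialGroup

/-- (One Mountain Theorem.)  If the singleton words `[f]` and `[g]` are related by the
equivalence relation generated by the single-contraction relation `⇝`, then there is a
nonempty word `w` with `w ⇝* [f]` and `w ⇝* [g]`. -/
theorem one_mountain {M : Type u} (P : PartialGroup M) (f g : M)
    (h : Relation.EqvGen P.Contract [f] [g]) :
    ∃ w : List M, w ≠ [] ∧ P.ContractStar w [f] ∧ P.ContractStar w [g] := by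
  have hcontract : P.Contract ≤ Relation.Join (Function.swap P.ContractStar) :=
    fun x _ hxy ↦ ⟨x, .refl, hxy.contractStar⟩
  obtain ⟨w, hf, hg⟩ :=
    P.equivalence_join_swap_contractStar.eqvGen_iff.mp (Relation.EqvGen.mono hcontract _ _ h)
  exact ⟨w, hf.eq_nil_iff.not.mpr (List.cons_ne_nil f []), hf, hg⟩
end

section
/- A partial group M embeds in a group if and only if the canonical map η : M → G₀(M) to its enveloping presented group is injective. -/
/-- A partial group embeds in a group if there is a group `G` and an injective map
`φ : M → G` with `φ (Π w) = (w.map φ).prod` for every `w ∈ D`. -/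
def PartialGroup.EmbedsInGroup {M : Type u} (P : PartialGroup M) : Prop :=
  ∃ (G : Type u) (_ : Group G) (φ : M → G), Function.Injective φ ∧
    ∀ w ∈ P.D, φ (P.pi w) = (w.map φ).prod

/-- The relators `a · b · (Π [a, b])⁻¹` for `[a, b] ∈ D` in the free group on `M`,
presenting the enveloping group `G₀(M)`. -/
def PartialGroup.relators {M : Type u} (P : PartialGroup M) : Set (FreeGroup M) :=
  { r | ∃ a b : M, [a, b] ∈ P.D ∧
      r = FreeGroup.of a * FreeGroup.of b * (FreeGroup.of (P.pi [a, b]))⁻¹ }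

/-- The enveloping presented group `G₀(M)` of a partial group. -/
def PartialGroup.envGroup {M : Type u} (P : PartialGroup M) : Type u :=
  PresentedGroup P.relators

instance {M : Type u} (P : PartialGroup M) : Group P.envGroup :=
  inferInstanceAs (Group (PresentedGroup P.relators))

/-- The canonical map `η : M → G₀(M)`. -/
def PartialGroup.eta {M : Type u} (P : PartialGroup M) : M → P.envGroup :=
  PresentedGroup.of

/-! A map `φ` from `M` to a group that is multiplicative on the pairs `[a, b] ∈ D` is
multiplicative on all of `D`, because every word of `D` can be evaluated by repeatedly
contracting its first two letters. Such maps are exactly those killing the relators, so they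
all factor through `η`; an embedding therefore forces `η` to be injective, and conversely `η`
is itself such a map. -/

namespace PartialGroup

variable {M : Type u} (P : PartialGroup M) {G : Type*} [Group G] {φ : M → G}

theorem map_pi_nil_of_map_pi_pair
    (hφ : ∀ a b, [a, b] ∈ P.D → φ (P.pi [a, b]) = φ a * φ b) : φ (P.pi []) = 1 := by
  obtain ⟨x⟩ := P.nonempty
  have hx : [x] ∈ P.D := P.mem_D_of_length_le_one _ le_rfl
  have hpair : [P.pi [], x] ∈ P.D := P.mem_D_contract [] [] [x] hx
  have hpi : P.pi [P.pi [], x] = x := (P.pi_contract [] [] [x] hx).symm.trans (P.pi_single x)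
  have := hφ _ _ hpair
  rw [hpi] at this
  exact right_eq_mul.mp this

theorem map_pi_of_map_pi_pair
    (hφ : ∀ a b, [a, b] ∈ P.D → φ (P.pi [a, b]) = φ a * φ b) :
    ∀ w ∈ P.D, φ (P.pi w) = (w.map φ).prod
  | [], _ => by simpa using P.map_pi_nil_of_map_pi_pair hφ
  | [a], _ => by simp [P.pi_single]
  | a :: b :: t, hw => by
    have hab : [a, b] ∈ P.D := P.mem_D_of_append_left [a, b] t hw
    have ih := map_pi_of_map_pi_pair hφ (P.pi [a, b] :: t) (P.mem_D_contract [] [a, b] t hw)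
    calc φ (P.pi (a :: b :: t)) = φ (P.pi (P.pi [a, b] :: t)) :=
          congrArg φ (P.pi_contract [] [a, b] t hw)
      _ = φ (P.pi [a, b]) * (t.map φ).prod := by simpa using ih
      _ = ((a :: b :: t).map φ).prod := by simp [hφ a b hab, mul_assoc]
termination_by w => w.length

theorem eta_pi_pair {a b : M} (h : [a, b] ∈ P.D) :
    P.eta (P.pi [a, b]) = P.eta a * P.eta b := by
  have hrel : PresentedGroup.mk P.relators
      (FreeGroup.of a * FreeGroup.of b * (FreeGroup.of (P.pi [a, b]))⁻¹) = 1 :=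
    (QuotientGroup.eq_one_iff _).mpr (Subgroup.subset_normalClosure ⟨a, b, h, rfl⟩)
  rw [map_mul, map_inv, mul_inv_eq_one] at hrel
  exact hrel.symm

theorem lift_eq_one_of_mem_relators
    (hφ : ∀ a b, [a, b] ∈ P.D → φ (P.pi [a, b]) = φ a * φ b) :
    ∀ r ∈ P.relators, FreeGroup.lift φ r = 1 := by
  rintro r ⟨a, b, hab, rfl⟩
  simp [hφ a b hab]

end PartialGroup

/-- A partial group embeds in a group if and only if the canonical map `η : M → G₀(M)`
to its enveloping presented group is injective. -/
theorem embedsInGroup_iff_eta_injective {M : Type u} (P : PartialGroup M) :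
    P.EmbedsInGroup ↔ Function.Injective P.eta := by
  constructor
  · rintro ⟨G, _, φ, hinj, hφ⟩
    have hrel := P.lift_eq_one_of_mem_relators fun a b hab => by simpa using hφ [a, b] hab
    exact fun x y hxy => hinj <| by
      simpa [PartialGroup.eta] using congrArg (PresentedGroup.toGroup hrel) hxy
  · intro hinj
    exact ⟨P.envGroup, inferInstance, P.eta, hinj,
      P.map_pi_of_map_pi_pair fun _ _ => P.eta_pi_pair⟩
end
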